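/- Let E, F be orthogonal projections on an infinite-dimensional complex Hilbert space H, both of the same finite rank N, with E∧F = 0 and Tr[(E − F)²] < 2. Then there exists an orthonormal basis {e_1, …, e_N} of the range of E such that, setting f_j := Fe_j/‖Fe_j‖ (these vectors are well defined since Fe_j ≠ 0), the vectors {f_1, …, f_N} form an orthonormal basis of the range of F satisfying ⟨f_j, e_k⟩ = 0 for all j ≠ k and ⟨f_j, e_j⟩ ≠ 0 for all j; equivalently, P_{f_j}(E − P_{e_j}) = 0 and P_{e_j}(F − P_{f_j}) = 0 for all j. Moreover, for this basis {e_j}, the system {f_j} with these properties is unique up to multiplication of each f_j by a nonzero complex scalar of modulus one. -/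

import Mathlib

open scoped InnerProductSpace

variable {H : Type*} [NormedAddCommGroup H] [InnerProductSpace ℂ H] [CompleteSpace H]

/-- The trace of a bounded operator on a Hilbert space, computed along a Hilbert basis
(for trace-class — in particular finite-rank — operators this is the usual,
basis-independent, trace `Tr`). -/
noncomputable def traceAlong {ι : Type*} (b : HilbertBasis ι ℂ H) (A : H →L[ℂ] H) : ℂ :=
  ∑' i, (inner ℂ (b i) (A (b i)) : ℂ)

/-- The absolute value `|A| := √(A⋆A)` of a bounded operator, via the continuous
functional calculus. -/
noncomputable def absCLM (A : H →L[ℂ] H) : H →L[ℂ] H := CFC.sqrt (star A * A)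

/-- The Hilbert–Schmidt norm `‖A‖₂ := √(Tr(A⋆A))`, computed along a Hilbert basis. -/
noncomputable def hsNormAlong {ι : Type*} (b : HilbertBasis ι ℂ H) (A : H →L[ℂ] H) : ℝ :=
  Real.sqrt (traceAlong b (star A * A)).re

/-- The trace norm `‖A‖₁ := Tr|A|`, computed along a Hilbert basis. -/
noncomputable def trNormAlong {ι : Type*} (b : HilbertBasis ι ℂ H) (A : H →L[ℂ] H) : ℝ :=
  (traceAlong b (absCLM A)).re

/-- An orthogonal projection: a bounded idempotent self-adjoint operator. -/
def IsOrthogonalProjection {H : Type*} [NormedAddCommGroup H] [InnerProductSpace ℂ H]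
    [CompleteSpace H] (E : H →L[ℂ] H) : Prop :=
  IsSelfAdjoint E ∧ E * E = E

/-! Choose an orthonormal basis `e_j` of `ran E` diagonalising the Gram matrix of the vectors
`F e_j` (an eigenbasis of `(F|ran E)⋆ (F|ran E)`). In this basis
`Tr[(E - F)²] = 2N - 2 ∑ ‖F e_j‖²`, and as every `‖F e_j‖² ≤ 1`, the bound `Tr < 2` forces all
`F e_j ≠ 0`. The normalised `f_j` are then `N` orthonormal vectors in the `N`-dimensional `ran F`,
and `⟪f_j, e_k⟫ = ⟪F e_j, F e_k⟫ / ‖F e_j‖` vanishes for `j ≠ k`. Conversely a unit vector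
`g_j ∈ ran F` orthogonal to `e_k` is orthogonal to `F e_k`, hence to `f_k`; so `g_j ⊥ f_k` for all
`k ≠ j`, which makes `g_j` a unimodular multiple of `f_j`. -/

open Module

section General

variable {𝕜 K : Type*} [RCLike 𝕜] [NormedAddCommGroup K] [InnerProductSpace 𝕜 K]

theorem orthonormal_inv_norm_smul {ι : Type*} {w : ι → K}
    (hw : Pairwise fun j k => ⟪w j, w k⟫_𝕜 = 0) (hw0 : ∀ j, w j ≠ 0) :
    Orthonormal 𝕜 fun j => (‖w j‖⁻¹ : 𝕜) • w j :=
  ⟨fun j => norm_smul_inv_norm (hw0 j), fun j k hjk => by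
    dsimp only
    rw [inner_smul_left, inner_smul_right, hw hjk, mul_zero, mul_zero]⟩

theorem Orthonormal.eq_inner_smul_of_inner_eq_zero {ι : Type*} [Fintype ι] {f : ι → K}
    (hf : Orthonormal 𝕜 f) {x : K} (hx : x ∈ Submodule.span 𝕜 (Set.range f)) {j : ι}
    (h : ∀ k, k ≠ j → ⟪f k, x⟫_𝕜 = 0) : x = ⟪f j, x⟫_𝕜 • f j := by
  obtain ⟨c, rfl⟩ := (Submodule.mem_span_range_iff_exists_fun 𝕜).mp hx
  simp only [hf.inner_right_fintype] at h ⊢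
  exact Finset.sum_eq_single j (fun k _ hk => by rw [h k hk, zero_smul]) (by simp)

theorem Orthonormal.exists_norm_eq_one_smul {ι : Type*} [Fintype ι] {f g : ι → K}
    (hf : Orthonormal 𝕜 f) (hg : Orthonormal 𝕜 g)
    (hgf : ∀ j, g j ∈ Submodule.span 𝕜 (Set.range f)) (h : ∀ j k, k ≠ j → ⟪f k, g j⟫_𝕜 = 0) :
    ∃ c : ι → 𝕜, ∀ j, ‖c j‖ = 1 ∧ g j = c j • f j := by
  refine ⟨fun j => ⟪f j, g j⟫_𝕜, fun j => ?_⟩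
  have hgj := hf.eq_inner_smul_of_inner_eq_zero (hgf j) (h j)
  refine ⟨?_, hgj⟩
  simpa [norm_smul, hf.1 j, hg.1 j] using congrArg norm hgj.symm

theorem LinearIndependent.span_range_eq_of_finrank_eq {ι : Type*} [Fintype ι] {v : ι → K}
    (hv : LinearIndependent 𝕜 v) {W : Submodule 𝕜 K} [FiniteDimensional 𝕜 W]
    (hvW : ∀ j, v j ∈ W) (hW : finrank 𝕜 W = Fintype.card ι) :
    Submodule.span 𝕜 (Set.range v) = W :=
  Submodule.eq_of_le_of_finrank_le (Submodule.span_le.mpr (Set.range_subset_iff.mpr hvW))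
    (by rw [finrank_span_eq_card hv, hW])

theorem exists_orthonormalBasis_pairwise_inner_map_eq_zero {V : Type*}
    [NormedAddCommGroup V] [InnerProductSpace 𝕜 V] [FiniteDimensional 𝕜 V] [CompleteSpace K]
    {n : ℕ} (hn : finrank 𝕜 V = n) (A : V →L[𝕜] K) :
    ∃ v : OrthonormalBasis (Fin n) 𝕜 V, Pairwise fun j k => ⟪A (v j), A (v k)⟫_𝕜 = 0 := by
  have := FiniteDimensional.complete 𝕜 V
  have hT : (A.adjoint ∘L A : V →ₗ[𝕜] V).IsSymmetric :=
    A.isPositive_adjoint_comp_self.isSymmetric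
  refine ⟨hT.eigenvectorBasis hn, fun j k hjk => ?_⟩
  dsimp only
  rw [← A.adjoint_inner_right, ← ContinuousLinearMap.comp_apply,
    ← ContinuousLinearMap.coe_coe, hT.apply_eigenvectorBasis, inner_smul_right,
    (hT.eigenvectorBasis hn).orthonormal.inner_eq_zero hjk, mul_zero]

theorem HilbertBasis.hasSum_inner_apply_of_eq_sum {ι κ : Type*} [Fintype κ]
    (b : HilbertBasis ι 𝕜 K) {A : K → K} {w u : κ → K}
    (hA : ∀ x, A x = ∑ j, ⟪w j, x⟫_𝕜 • u j) :
    HasSum (fun i => ⟪b i, A (b i)⟫_𝕜) (∑ j, ⟪w j, u j⟫_𝕜) := by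
  simp only [hA, inner_sum, inner_smul_right]
  exact hasSum_sum fun j _ => b.hasSum_inner_mul_inner (w j) (u j)

end General

theorem pos_of_card_sub_one_lt_sum {ι : Type*} [Fintype ι] {a : ι → ℝ} (ha : ∀ i, a i ≤ 1)
    (hsum : (Fintype.card ι : ℝ) - 1 < ∑ i, a i) (i : ι) : 0 < a i := by
  have : 1 - a i ≤ ∑ k, (1 - a k) :=
    Finset.single_le_sum (fun k _ => sub_nonneg.mpr (ha k)) (Finset.mem_univ i)
  simp only [Finset.sum_sub_distrib, Finset.sum_const, Finset.card_univ, nsmul_eq_mul,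
    mul_one] at this
  linarith

namespace IsOrthogonalProjection

variable {E F : H →L[ℂ] H}

theorem apply_apply (hE : IsOrthogonalProjection E) (x : H) : E (E x) = E x :=
  congr($(hE.2) x)

theorem apply_of_mem_range (hE : IsOrthogonalProjection E) {x : H}
    (hx : x ∈ LinearMap.range (E : H →ₗ[ℂ] H)) : E x = x := by
  obtain ⟨y, rfl⟩ := hx
  exact hE.apply_apply y

theorem inner_map_left (hE : IsOrthogonalProjection E) (x y : H) :
    ⟪E x, y⟫_ℂ = ⟪x, E y⟫_ℂ :=
  hE.1.isSymmetric x y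

theorem inner_map_left_of_mem_range (hE : IsOrthogonalProjection E) (x : H) {y : H}
    (hy : y ∈ LinearMap.range (E : H →ₗ[ℂ] H)) : ⟪E x, y⟫_ℂ = ⟪x, y⟫_ℂ := by
  rw [hE.inner_map_left, hE.apply_of_mem_range hy]

theorem inner_map_map (hE : IsOrthogonalProjection E) (x y : H) :
    ⟪E x, E y⟫_ℂ = ⟪E x, y⟫_ℂ := by
  rw [← hE.inner_map_left, hE.apply_apply]

theorem norm_map_le (hE : IsOrthogonalProjection E) (x : H) : ‖E x‖ ≤ ‖x‖ := by
  obtain ⟨_, hEq⟩ := isStarProjection_iff_eq_starProjection_range.mp ⟨hE.2, hE.1⟩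
  rw [hEq]
  exact Submodule.norm_starProjection_apply_le _ x

theorem apply_eq_sum (hE : IsOrthogonalProjection E) {κ : Type*} [Fintype κ]
    (v : OrthonormalBasis κ ℂ (LinearMap.range (E : H →ₗ[ℂ] H))) (x : H) :
    E x = ∑ j, ⟪(v j : H), x⟫_ℂ • (v j : H) := by
  have := congr(Subtype.val $(v.sum_repr' ⟨E x, x, rfl⟩))
  push_cast [Submodule.coe_inner] at this
  conv_lhs => rw [← this]
  simp only [← hE.inner_map_left, hE.apply_of_mem_range (v _).2]

theorem hasSum_inner_map_self (hE : IsOrthogonalProjection E)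
    [FiniteDimensional ℂ (LinearMap.range (E : H →ₗ[ℂ] H))] {ι : Type*}
    (b : HilbertBasis ι ℂ H) :
    HasSum (fun i => ⟪b i, E (b i)⟫_ℂ) (finrank ℂ (LinearMap.range (E : H →ₗ[ℂ] H))) := by
  let v := stdOrthonormalBasis ℂ (LinearMap.range (E : H →ₗ[ℂ] H))
  have h := b.hasSum_inner_apply_of_eq_sum (hE.apply_eq_sum v)
  have hv : ∀ j, ‖(v j : H)‖ = 1 := fun j => v.orthonormal.1 j
  have : ∑ j, ⟪(v j : H), (v j : H)⟫_ℂ = finrank ℂ (LinearMap.range (E : H →ₗ[ℂ] H)) := by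
    simp [hv]
  rwa [this] at h

theorem re_traceAlong_sub_mul_sub (hE : IsOrthogonalProjection E)
    (hF : IsOrthogonalProjection F) [FiniteDimensional ℂ (LinearMap.range (E : H →ₗ[ℂ] H))]
    [FiniteDimensional ℂ (LinearMap.range (F : H →ₗ[ℂ] H))] {ι κ : Type*} [Fintype κ]
    (b : HilbertBasis ι ℂ H) (e : OrthonormalBasis κ ℂ (LinearMap.range (E : H →ₗ[ℂ] H))) :
    (traceAlong b ((E - F) * (E - F))).re =
      finrank ℂ (LinearMap.range (E : H →ₗ[ℂ] H)) + finrank ℂ (LinearMap.range (F : H →ₗ[ℂ] H))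
        - 2 * ∑ j, ‖F (e j)‖ ^ 2 := by
  have hEF : HasSum (fun i => ⟪b i, E (F (b i))⟫_ℂ) (∑ j, ⟪F (e j), (e j : H)⟫_ℂ) :=
    b.hasSum_inner_apply_of_eq_sum (A := fun x => E (F x)) fun x => by
      simp only [hE.apply_eq_sum e (F x), hF.inner_map_left]
  have hFE : HasSum (fun i => ⟪b i, F (E (b i))⟫_ℂ) (∑ j, ⟪(e j : H), F (e j)⟫_ℂ) :=
    b.hasSum_inner_apply_of_eq_sum (A := fun x => F (E x)) fun x => by
      simp only [hE.apply_eq_sum e x, map_sum, map_smul]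
  have hsum :=
    (((hE.hasSum_inner_map_self b).add (hF.hasSum_inner_map_self b)).sub hEF).sub hFE
  have hsq : ∀ x, ((E - F) * (E - F)) x = E x + F x - E (F x) - F (E x) := fun x => by
    simp only [mul_apply_eq_comp, sub_apply, map_sub, hE.apply_apply, hF.apply_apply]
    abel
  have hdiag : ∀ j, ⟪F (e j), (e j : H)⟫_ℂ = ((‖F (e j)‖ ^ 2 : ℝ) : ℂ) := fun j => by
    rw [← hF.inner_map_map, inner_self_eq_norm_sq_to_K]
    norm_cast
  simp only [traceAlong, hsq, inner_sub_right, inner_add_right]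
  rw [hsum.tsum_eq]
  simp only [← hF.inner_map_left, hdiag, ← Complex.ofReal_sum]
  simp only [Complex.sub_re, Complex.add_re, Complex.natCast_re, Complex.ofReal_re]
  ring

theorem exists_orthonormalBasis_of_re_traceAlong_lt_two (hE : IsOrthogonalProjection E)
    (hF : IsOrthogonalProjection F) [FiniteDimensional ℂ (LinearMap.range (E : H →ₗ[ℂ] H))]
    [FiniteDimensional ℂ (LinearMap.range (F : H →ₗ[ℂ] H))] {N : ℕ}
    (hEr : finrank ℂ (LinearMap.range (E : H →ₗ[ℂ] H)) = N)
    (hFr : finrank ℂ (LinearMap.range (F : H →ₗ[ℂ] H)) = N) {ι : Type*}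
    (b : HilbertBasis ι ℂ H) (htr : (traceAlong b ((E - F) * (E - F))).re < 2) :
    ∃ v : OrthonormalBasis (Fin N) ℂ (LinearMap.range (E : H →ₗ[ℂ] H)),
      (Pairwise fun j k => ⟪F (v j), F (v k)⟫_ℂ = 0) ∧ ∀ j, F (v j) ≠ 0 := by
  obtain ⟨v, hv⟩ := exists_orthonormalBasis_pairwise_inner_map_eq_zero hEr
    (F ∘L (LinearMap.range (E : H →ₗ[ℂ] H)).subtypeL)
  refine ⟨v, hv, fun j => norm_ne_zero_iff.mp (pow_ne_zero_iff two_ne_zero |>.mp ?_)⟩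
  refine (pos_of_card_sub_one_lt_sum (a := fun j => ‖F (v j)‖ ^ 2) (fun j => ?_) ?_ j).ne'
  · exact pow_le_one₀ (norm_nonneg _) ((hF.norm_map_le _).trans (v.orthonormal.1 j).le)
  · have := hE.re_traceAlong_sub_mul_sub hF b v
    rw [hEr, hFr] at this
    rw [Fintype.card_fin]
    linarith

end IsOrthogonalProjection

theorem statement3_general {H : Type*} [NormedAddCommGroup H] [InnerProductSpace ℂ H] [CompleteSpace H]
    {ι : Type*} (b : HilbertBasis ι ℂ H) (N : ℕ)
    (E F : H →L[ℂ] H) (hE : IsOrthogonalProjection E) (hF : IsOrthogonalProjection F)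
    (hEfd : FiniteDimensional ℂ (LinearMap.range (E : H →ₗ[ℂ] H)))
    (hFfd : FiniteDimensional ℂ (LinearMap.range (F : H →ₗ[ℂ] H)))
    (hEr : Module.finrank ℂ (LinearMap.range (E : H →ₗ[ℂ] H)) = N)
    (hFr : Module.finrank ℂ (LinearMap.range (F : H →ₗ[ℂ] H)) = N)
    (htr : (traceAlong b ((E - F) * (E - F))).re < 2) :
    ∃ e f : Fin N → H,
      Orthonormal ℂ e ∧ (∀ j, e j ∈ LinearMap.range (E : H →ₗ[ℂ] H)) ∧
      Submodule.span ℂ (Set.range e) = LinearMap.range (E : H →ₗ[ℂ] H) ∧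
      (∀ j, F (e j) ≠ 0) ∧ (∀ j, f j = ‖F (e j)‖⁻¹ • F (e j)) ∧
      Orthonormal ℂ f ∧ (∀ j, f j ∈ LinearMap.range (F : H →ₗ[ℂ] H)) ∧
      Submodule.span ℂ (Set.range f) = LinearMap.range (F : H →ₗ[ℂ] H) ∧
      (∀ j k, j ≠ k → (inner ℂ (f j) (e k) : ℂ) = 0) ∧ (∀ j, (inner ℂ (f j) (e j) : ℂ) ≠ 0) ∧
      (∀ g : Fin N → H, Orthonormal ℂ g →
        (∀ j, g j ∈ LinearMap.range (F : H →ₗ[ℂ] H)) →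
        Submodule.span ℂ (Set.range g) = LinearMap.range (F : H →ₗ[ℂ] H) →
        (∀ j k, j ≠ k → (inner ℂ (g j) (e k) : ℂ) = 0) →
        (∀ j, (inner ℂ (g j) (e j) : ℂ) ≠ 0) →
        ∃ c : Fin N → ℂ, ∀ j, ‖c j‖ = 1 ∧ g j = c j • f j) := by
  obtain ⟨v, hv, hFe0⟩ := hE.exists_orthonormalBasis_of_re_traceAlong_lt_two hF hEr hFr b htr
  set e : Fin N → H := fun j => v j
  set f : Fin N → H := fun j => ‖F (e j)‖⁻¹ • F (e j)
  have hfj : ∀ j, f j = (‖F (e j)‖⁻¹ : ℂ) • F (e j) := fun j => by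
    simp [f, RCLike.real_smul_eq_coe_smul (K := ℂ)]
  have hf : Orthonormal ℂ f := funext hfj ▸ orthonormal_inv_norm_smul hv hFe0
  have hfW : ∀ j, f j ∈ LinearMap.range (F : H →ₗ[ℂ] H) := fun j =>
    hfj j ▸ Submodule.smul_mem _ _ (LinearMap.mem_range_self _ _)
  have hspan_f : Submodule.span ℂ (Set.range f) = LinearMap.range (F : H →ₗ[ℂ] H) :=
    hf.linearIndependent.span_range_eq_of_finrank_eq hfW (by rw [hFr, Fintype.card_fin])
  have hfe : ∀ j k, ⟪f j, e k⟫_ℂ = (‖F (e j)‖⁻¹ : ℂ) * ⟪F (e j), F (e k)⟫_ℂ := fun j k => by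
    rw [hfj, inner_smul_left, hF.inner_map_map, map_inv₀, Complex.conj_ofReal]
  have he : Orthonormal ℂ e := v.orthonormal.comp_linearIsometry (Submodule.subtypeₗᵢ _)
  refine ⟨e, f, he, fun j => (v j).2,
    he.linearIndependent.span_range_eq_of_finrank_eq (fun j => (v j).2)
      (by rw [hEr, Fintype.card_fin]),
    hFe0, fun j => rfl, hf, hfW, hspan_f, fun j k hjk => by rw [hfe, hv hjk, mul_zero],
    fun j => ?_, fun g hg hgW _ hge _ =>
      hf.exists_norm_eq_one_smul hg (hspan_f ▸ hgW) fun j k hkj => ?_⟩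
  · have hFe0' : (‖F (e j)‖ : ℂ) ≠ 0 :=
      Complex.ofReal_ne_zero.mpr (norm_ne_zero_iff.mpr (hFe0 j))
    rw [hfe, inner_self_eq_norm_sq_to_K]
    exact mul_ne_zero (inv_ne_zero hFe0') (pow_ne_zero 2 hFe0')
  · rw [hfj, inner_smul_left, hF.inner_map_left_of_mem_range _ (hgW j),
      inner_eq_zero_symm.mp (hge j k hkj.symm), mul_zero]

/-- Under the hypotheses of Lemma 2.4 (`E, F` orthogonal projections of the same
finite rank `N` on an infinite-dimensional complex Hilbert space, `E ∧ F = 0`,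
`Tr[(E − F)²] < 2`), there is an orthonormal basis `{e_1, …, e_N}` of `ran E` such that the
normalized projections `f_j := F e_j / ‖F e_j‖` form an orthonormal basis of `ran F` with
`⟪f_j, e_k⟫ = 0` for `j ≠ k` and `⟪f_j, e_j⟫ ≠ 0`; moreover, for this basis `{e_j}` the system
`{f_j}` with these properties is unique up to multiplication of each `f_j` by a scalar of
modulus one. -/
theorem statement3 {H : Type*} [NormedAddCommGroup H] [InnerProductSpace ℂ H] [CompleteSpace H]
    (hinf : ¬FiniteDimensional ℂ H) {ι : Type*} (b : HilbertBasis ι ℂ H) (N : ℕ)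
    (E F : H →L[ℂ] H) (hE : IsOrthogonalProjection E) (hF : IsOrthogonalProjection F)
    (hEfd : FiniteDimensional ℂ (LinearMap.range (E : H →ₗ[ℂ] H)))
    (hFfd : FiniteDimensional ℂ (LinearMap.range (F : H →ₗ[ℂ] H)))
    (hEr : Module.finrank ℂ (LinearMap.range (E : H →ₗ[ℂ] H)) = N)
    (hFr : Module.finrank ℂ (LinearMap.range (F : H →ₗ[ℂ] H)) = N)
    (hmeet : LinearMap.range (E : H →ₗ[ℂ] H) ⊓ LinearMap.range (F : H →ₗ[ℂ] H) = ⊥)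
    (htr : (traceAlong b ((E - F) * (E - F))).re < 2) :
    ∃ e f : Fin N → H,
      Orthonormal ℂ e ∧ (∀ j, e j ∈ LinearMap.range (E : H →ₗ[ℂ] H)) ∧
      Submodule.span ℂ (Set.range e) = LinearMap.range (E : H →ₗ[ℂ] H) ∧
      (∀ j, F (e j) ≠ 0) ∧ (∀ j, f j = ‖F (e j)‖⁻¹ • F (e j)) ∧
      Orthonormal ℂ f ∧ (∀ j, f j ∈ LinearMap.range (F : H →ₗ[ℂ] H)) ∧
      Submodule.span ℂ (Set.range f) = LinearMap.range (F : H →ₗ[ℂ] H) ∧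
      (∀ j k, j ≠ k → (inner ℂ (f j) (e k) : ℂ) = 0) ∧ (∀ j, (inner ℂ (f j) (e j) : ℂ) ≠ 0) ∧
      (∀ g : Fin N → H, Orthonormal ℂ g →
        (∀ j, g j ∈ LinearMap.range (F : H →ₗ[ℂ] H)) →
        Submodule.span ℂ (Set.range g) = LinearMap.range (F : H →ₗ[ℂ] H) →
        (∀ j k, j ≠ k → (inner ℂ (g j) (e k) : ℂ) = 0) →
        (∀ j, (inner ℂ (g j) (e j) : ℂ) ≠ 0) →
        ∃ c : Fin N → ℂ, ∀ j, ‖c j‖ = 1 ∧ g j = c j • f j) :=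
  statement3_general b N E F hE hF hEfd hFfd hEr hFr htr
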